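/- Let N be an N-layer (open or closed) Π³-net with N≥3 and let m0 be any marking. Then for every m∈R(m0): (i) for every 1≤i≤N−2 and every p∈P_i, m(p) ≤ C_i^{m0}; (ii) for every p∈P_{N−1}^{¬max}, m(p) ≤ C_{N−2}^{m0}. -/

import Mathlib

open Finset

section PetriBasics

variable {P T : Type} [Fintype P] [Fintype T]

/-- Transition `t` is enabled at marking `m`. -/
def Enabled (Wm : P → T → ℕ) (m : P → ℕ) (t : T) : Prop :=
  ∀ p, Wm p t ≤ m p

/-- The marking obtained by firing transition `t` at marking `m`. -/
def Fire (Wm Wp : P → T → ℕ) (m : P → ℕ) (t : T) : P → ℕ :=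
  fun p => m p - Wm p t + Wp p t

/-- One firing step. -/
def Step (Wm Wp : P → T → ℕ) (m m' : P → ℕ) : Prop :=
  ∃ t, Enabled Wm m t ∧ m' = Fire Wm Wp m t

/-- Reachability. -/
def Reach (Wm Wp : P → T → ℕ) : (P → ℕ) → (P → ℕ) → Prop :=
  Relation.ReflTransGen (Step Wm Wp)

/-- One firing step using a transition from the set `S`. -/
def StepIn (Wm Wp : P → T → ℕ) (S : T → Prop) (m m' : P → ℕ) : Prop :=
  ∃ t, S t ∧ Enabled Wm m t ∧ m' = Fire Wm Wp m t

/-- Reachability using only transitions from the set `S`. -/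
def ReachIn (Wm Wp : P → T → ℕ) (S : T → Prop) : (P → ℕ) → (P → ℕ) → Prop :=
  Relation.ReflTransGen (StepIn Wm Wp S)

/-- The marked net `(N, m0)` is live. -/
def LiveMarked (Wm Wp : P → T → ℕ) (m0 : P → ℕ) : Prop :=
  ∀ (t : T) (m : P → ℕ), Reach Wm Wp m0 m →
    ∃ m', Reach Wm Wp m m' ∧ Enabled Wm m' t

/-- `b` is a bag of the net. -/
def IsBag (Wm Wp : P → T → ℕ) (b : P → ℕ) : Prop :=
  ∃ t, b = (fun p => Wm p t) ∨ b = (fun p => Wp p t)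

/-- Edges of the bag graph. -/
def BagEdge (Wm Wp : P → T → ℕ) (b b' : P → ℕ) : Prop :=
  ∃ t, b = (fun p => Wm p t) ∧ b' = (fun p => Wp p t)

/-- Every connected component of the bag graph is strongly connected. -/
def WeaklyReversible (Wm Wp : P → T → ℕ) : Prop :=
  ∀ b b' : P → ℕ,
    Relation.ReflTransGen (fun x y => BagEdge Wm Wp x y ∨ BagEdge Wm Wp y x) b b' →
    Relation.ReflTransGen (BagEdge Wm Wp) b b'

/-- `w · W(t)`, where `W = W⁺ − W⁻` is the incidence matrix. -/
def IncDot (Wm Wp : P → T → ℕ) (w : P → ℚ) (t : T) : ℚ :=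
  ∑ p, w p * ((Wp p t : ℚ) - (Wm p t : ℚ))

/-- `w` is a witness of the bag `b`. -/
def IsWitness (Wm Wp : P → T → ℕ) (b : P → ℕ) (w : P → ℚ) : Prop :=
  ∀ t, (b = (fun p => Wm p t) → IncDot Wm Wp w t = -1) ∧
       (b = (fun p => Wp p t) → IncDot Wm Wp w t = 1) ∧
       (b ≠ (fun p => Wm p t) → b ≠ (fun p => Wp p t) → IncDot Wm Wp w t = 0)

/-- `N` is a Π²-net. -/
def IsPi2 (Wm Wp : P → T → ℕ) : Prop :=
  WeaklyReversible Wm Wp ∧ ∀ b, IsBag Wm Wp b → ∃ w, IsWitness Wm Wp b w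

/-- The potential of a place: `‖b_p‖ − 1`. -/
def potOf (bag : P → P → ℕ) (p : P) : ℕ := (∑ q, bag p q) - 1

/-- Minimum of `f` over `S`, with default value `d` when `S` is empty. -/
def minPotD {α : Type} (S : Finset α) (f : α → ℕ) (d : ℕ) : ℕ :=
  if h : S.Nonempty then S.inf' h f else d

end PetriBasics

/-- An `Nn`-layer closed Π³-net. -/
structure ClosedPi3 (P T : Type) [Fintype P] [Fintype T] (Nn : ℕ) where
  Wm : P → T → ℕ
  Wp : P → T → ℕ
  no_useless : ∀ t, (fun p => Wm p t) ≠ (fun p => Wp p t)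
  no_dup : ∀ t t' : T, (fun p => Wm p t) = (fun p => Wm p t') →
      (fun p => Wp p t) = (fun p => Wp p t') → t = t'
  /-- the bag associated with each place -/
  bag : P → P → ℕ
  /-- the layer of each place -/
  layer : P → ℕ
  bag_isBag : ∀ p, IsBag Wm Wp (bag p)
  bag_surj : ∀ b, IsBag Wm Wp b → ∃ p, bag p = b
  bag_inj : Function.Injective bag
  bag_self : ∀ p, bag p p = 1
  layer_pos : ∀ p, 1 ≤ layer p
  layer_le : ∀ p, layer p ≤ Nn
  layer_surj : ∀ i, 1 ≤ i → i ≤ Nn → ∃ p, layer p = i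
  edge_layer : ∀ p q : P, BagEdge Wm Wp (bag p) (bag q) → layer p = layer q
  layer_conn : ∀ p q : P, layer p = layer q →
      Relation.ReflTransGen (BagEdge Wm Wp) (bag p) (bag q)
  resource : ∀ p q : P, q ≠ p → 0 < bag p q →
      layer q + 1 = layer p ∧ ∀ r, layer r = layer q → potOf bag r ≤ potOf bag q

namespace ClosedPi3

variable {P T : Type} [Fintype P] [Fintype T] {Nn : ℕ} (C : ClosedPi3 P T Nn)

def pot (p : P) : ℕ := potOf C.bag p

/-- `P_i`: the places of layer `i`. -/
def places (i : ℕ) : Finset P := Finset.univ.filter (fun p => C.layer p = i)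

/-- `POT_i`: the maximal potential in layer `i`. -/
def POT (i : ℕ) : ℕ := (C.places i).sup C.pot

/-- `P_i^max`: the places of maximal potential in layer `i`. -/
def placesMax (i : ℕ) : Finset P := (C.places i).filter (fun p => C.pot p = C.POT i)

/-- `cin(p) = POT_i − pot(p)` for `p ∈ P_i`. -/
def cin (p : P) : ℤ := (C.POT (C.layer p) : ℤ) - (C.pot p : ℤ)

/-- The invariant vector `v^(i)` (for `i = Nn` this is `v^(N)`). -/
def vvec (i : ℕ) : P → ℤ :=
  if i = Nn then (fun p => if C.layer p = Nn then 1 else 0)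
  else fun p => (if C.layer p = i then 1 else 0) + (if C.layer p = i + 1 then C.cin p else 0)

/-- `m · v^(i)`. -/
def vdot (i : ℕ) (m : P → ℕ) : ℤ := ∑ p, C.vvec i p * (m p : ℤ)

/-- `m ∈ Inv_i(m0)`. -/
def InvSet (m0 : P → ℕ) (i : ℕ) (m : P → ℕ) : Prop := C.vdot i m = C.vdot i m0

/-- `m ∈ Live_i`. -/
def LiveSet (i : ℕ) (m : P → ℕ) : Prop :=
  if i = Nn then 0 < ∑ p ∈ C.places Nn, m p
  else minPotD ((C.places (i + 1)).filter (fun p => 0 < m p)) C.pot (C.POT (i + 1))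
        ≤ ∑ p ∈ C.places i, m p

/-- `t` belongs to `⋃ {T_i | S i}`: the input bag of `t` lies in a layer satisfying `S`. -/
def transIn (S : ℕ → Prop) (t : T) : Prop :=
  ∃ p, S (C.layer p) ∧ C.bag p = (fun q => C.Wm q t)

/-- The marking `m` is `i`-live. -/
def iLive (i : ℕ) (m : P → ℕ) : Prop :=
  ∀ t, C.transIn (· ≤ i) t →
    ∃ m', ReachIn C.Wm C.Wp (C.transIn (· ≤ i)) m m' ∧ Enabled C.Wm m' t

end ClosedPi3

/-- An `Nn`-layer open Π³-net over places `P`: it is obtained from an `Nn`-layer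
closed Π³-net over `Option P` by deleting the place `none` (a.k.a. `p_ext`),
which lies in layer `Nn`. -/
structure OpenPi3 (P T : Type) [Fintype P] [Fintype T] (Nn : ℕ) where
  closed : ClosedPi3 (Option P) T Nn
  pext_layer : closed.layer none = Nn

namespace OpenPi3

variable {P T : Type} [Fintype P] [Fintype T] {Nn : ℕ} (O : OpenPi3 P T Nn)

/-- Backward incidence matrix of the open net. -/
def Wm : P → T → ℕ := fun p t => O.closed.Wm (some p) t

/-- Forward incidence matrix of the open net. -/
def Wp : P → T → ℕ := fun p t => O.closed.Wp (some p) t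

def layer (p : P) : ℕ := O.closed.layer (some p)

def pot (p : P) : ℕ := O.closed.pot (some p)

/-- `pot(p_ext)`. -/
def potExt : ℕ := O.closed.pot none

/-- `P_i`: the (remaining) places of layer `i`. -/
def places (i : ℕ) : Finset P := Finset.univ.filter (fun p => O.layer p = i)

/-- `POT_i`, with `POT_N = pot(p_ext)` for open nets. -/
def POT (i : ℕ) : ℕ := if i = Nn then O.potExt else (O.places i).sup O.pot

def placesMax (i : ℕ) : Finset P := (O.places i).filter (fun p => O.pot p = O.POT i)

def cin (p : P) : ℤ := (O.POT (O.layer p) : ℤ) - (O.pot p : ℤ)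

/-- The invariant vector `v^(i)` (used for `1 ≤ i ≤ Nn − 1`). -/
def vvec (i : ℕ) : P → ℤ :=
  fun p => (if O.layer p = i then 1 else 0) + (if O.layer p = i + 1 then O.cin p else 0)

def vdot (i : ℕ) (m : P → ℕ) : ℤ := ∑ p, O.vvec i p * (m p : ℤ)

def InvSet (m0 : P → ℕ) (i : ℕ) (m : P → ℕ) : Prop :=
  if i = Nn then True else O.vdot i m = O.vdot i m0

/-- `m ∈ Live_i` for the open net: for `i = N − 1` the virtual place `p_ext`
always counts as marked. -/
def LiveSet (i : ℕ) (m : P → ℕ) : Prop :=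
  if i = Nn then True
  else if i + 1 = Nn then
    min O.potExt
        (minPotD ((O.places Nn).filter (fun p => 0 < m p)) O.pot O.potExt)
      ≤ ∑ p ∈ O.places i, m p
  else
    minPotD ((O.places (i + 1)).filter (fun p => 0 < m p)) O.pot (O.POT (i + 1))
      ≤ ∑ p ∈ O.places i, m p

def transIn (S : ℕ → Prop) (t : T) : Prop := O.closed.transIn S t

def iLive (i : ℕ) (m : P → ℕ) : Prop :=
  ∀ t, O.transIn (· ≤ i) t →
    ∃ m', ReachIn O.Wm O.Wp (O.transIn (· ≤ i)) m m' ∧ Enabled O.Wm m' t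

end OpenPi3

/-!
For `i < N` the vector `v^(i)` pairs with every bag `b_q` to a number depending only on the
layer of `q`: a resource place of a bag of layer `i + 1` lies in `P_i^max`, so it carries
coefficient `1`, and `cin(q) + pot(q) = POT_{i+1}`; resources of bags in other layers carry
coefficient `0`. Since both ends of a transition lie in the same layer, `v^(i)` is a place
invariant. It is nonnegative, with coefficient `1` on `P_i` and `cin(p) ≥ 1` on
`P_{i+1}^{¬max}`, so each such `m(p)` is bounded by `m · v^(i) = m0 · v^(i)`. For an open net
the coefficient of `p_ext` in `v^(i)`, `i ≤ N - 2`, vanishes, so the invariant survives the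
deletion of `p_ext`.
-/

section Invariants

variable {P T : Type}

lemma Enabled.coe_fire {Wm Wp : P → T → ℕ} {m : P → ℕ} {t : T} (h : Enabled Wm m t)
    (p : P) : (Fire Wm Wp m t p : ℤ) = m p + ((Wp p t : ℤ) - Wm p t) := by
  have := h p
  simp only [Fire]
  omega

variable [Fintype P]

lemma Reach.sum_mul_eq {Wm Wp : P → T → ℕ} {m0 m : P → ℕ} (h : Reach Wm Wp m0 m)
    {v : P → ℤ} (hv : ∀ t, ∑ p, v p * ((Wp p t : ℤ) - Wm p t) = 0) :
    ∑ p, v p * (m p : ℤ) = ∑ p, v p * (m0 p : ℤ) := by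
  induction h with
  | refl => rfl
  | tail _ hstep ih =>
    obtain ⟨t, hen, rfl⟩ := hstep
    simp only [hen.coe_fire, mul_add, Finset.sum_add_distrib, hv t, add_zero, ih]

lemma coe_le_sum_mul_of_one_le {v : P → ℤ} (m : P → ℕ) (hv : ∀ q, 0 ≤ v q) {p : P}
    (hp : 1 ≤ v p) : (m p : ℤ) ≤ ∑ q, v q * (m q : ℤ) :=
  (le_mul_of_one_le_left (Int.natCast_nonneg _) hp).trans
    (Finset.single_le_sum (fun q _ => mul_nonneg (hv q) (Int.natCast_nonneg _))
      (Finset.mem_univ p))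

lemma Reach.coe_le_sum_mul {Wm Wp : P → T → ℕ} {m0 m : P → ℕ} (h : Reach Wm Wp m0 m)
    {v : P → ℤ} (hinv : ∀ t, ∑ p, v p * ((Wp p t : ℤ) - Wm p t) = 0)
    (hv : ∀ q, 0 ≤ v q) {p : P} (hp : 1 ≤ v p) : (m p : ℤ) ≤ ∑ q, v q * (m0 q : ℤ) :=
  h.sum_mul_eq hinv ▸ coe_le_sum_mul_of_one_le m hv hp

end Invariants

namespace ClosedPi3

variable {P T : Type} [Fintype P] [Fintype T] {Nn : ℕ} (C : ClosedPi3 P T Nn)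

lemma mem_places_iff {p : P} {i : ℕ} : p ∈ C.places i ↔ C.layer p = i := by
  simp [places]

lemma pot_le_POT (p : P) : C.pot p ≤ C.POT (C.layer p) :=
  Finset.le_sup ((C.mem_places_iff).2 rfl)

lemma cin_nonneg (p : P) : 0 ≤ C.cin p :=
  sub_nonneg.2 (by exact_mod_cast C.pot_le_POT p)

lemma cin_eq_zero_of_forall_pot_le {p : P}
    (hp : ∀ r, C.layer r = C.layer p → C.pot r ≤ C.pot p) : C.cin p = 0 := by
  have hPOT : C.POT (C.layer p) = C.pot p :=
    le_antisymm (Finset.sup_le fun r hr => hp r ((C.mem_places_iff).1 hr)) (C.pot_le_POT p)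
  simp [cin, hPOT]

lemma pot_eq_sum_erase [DecidableEq P] (q : P) :
    C.pot q = ∑ p ∈ Finset.univ.erase q, C.bag q p := by
  rw [pot, potOf, ← Finset.add_sum_erase _ _ (Finset.mem_univ q), C.bag_self,
    Nat.add_sub_cancel_left]

lemma vvec_of_ne {i : ℕ} (hi : i ≠ Nn) (p : P) :
    C.vvec i p =
      (if C.layer p = i then 1 else 0) + (if C.layer p = i + 1 then C.cin p else 0) := by
  simp [vvec, hi]

lemma vvec_nonneg {i : ℕ} (hi : i ≠ Nn) (p : P) : 0 ≤ C.vvec i p := by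
  rw [C.vvec_of_ne hi]
  have := C.cin_nonneg p
  split_ifs <;> omega

/-- A resource place of `b_q` lies in `P^max` of the layer below `q`, where `cin` vanishes. -/
lemma vvec_mul_bag_of_ne {i : ℕ} (hi : i ≠ Nn) {p q : P} (hpq : p ≠ q) :
    C.vvec i p * C.bag q p = if C.layer q = i + 1 then (C.bag q p : ℤ) else 0 := by
  rcases Nat.eq_zero_or_pos (C.bag q p) with h0 | hpos
  · simp [h0]
  obtain ⟨hlayer, hmax⟩ := C.resource q p hpq hpos
  rw [C.vvec_of_ne hi, C.cin_eq_zero_of_forall_pot_le hmax]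
  split_ifs <;> omega

lemma vvec_mul_bag_sum [DecidableEq P] {i : ℕ} (hi : i ≠ Nn) (q : P) :
    ∑ p, C.vvec i p * C.bag q p =
      (if C.layer q = i then 1 else 0) +
        (if C.layer q = i + 1 then (C.POT (i + 1) : ℤ) else 0) := by
  have hres : ∑ p ∈ Finset.univ.erase q, C.vvec i p * C.bag q p =
      if C.layer q = i + 1 then (C.pot q : ℤ) else 0 := by
    rw [Finset.sum_congr rfl fun p hp => C.vvec_mul_bag_of_ne hi (Finset.ne_of_mem_erase hp)]
    split_ifs
    · rw [C.pot_eq_sum_erase, Nat.cast_sum]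
    · exact Finset.sum_const_zero
  rw [← Finset.add_sum_erase _ _ (Finset.mem_univ q), hres, C.bag_self, C.vvec_of_ne hi]
  by_cases hq : C.layer q = i + 1
  · simp [hq, cin]
  · simp [hq]

lemma sum_mul_incidence_eq_zero {v : P → ℤ} (f : ℕ → ℤ)
    (hv : ∀ q, ∑ p, v p * C.bag q p = f (C.layer q)) (t : T) :
    ∑ p, v p * ((C.Wp p t : ℤ) - C.Wm p t) = 0 := by
  obtain ⟨qm, hqm⟩ := C.bag_surj (fun p => C.Wm p t) ⟨t, Or.inl rfl⟩
  obtain ⟨qp, hqp⟩ := C.bag_surj (fun p => C.Wp p t) ⟨t, Or.inr rfl⟩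
  have hlayer : C.layer qm = C.layer qp := C.edge_layer _ _ ⟨t, hqm, hqp⟩
  have hWm : ∀ p, C.Wm p t = C.bag qm p := fun p => by rw [hqm]
  have hWp : ∀ p, C.Wp p t = C.bag qp p := fun p => by rw [hqp]
  simp only [hWm, hWp, mul_sub, Finset.sum_sub_distrib, hv, hlayer, sub_self]

lemma vvec_incidence_eq_zero {i : ℕ} (hi : i ≠ Nn) (t : T) :
    ∑ p, C.vvec i p * ((C.Wp p t : ℤ) - C.Wm p t) = 0 := by
  classical
  exact C.sum_mul_incidence_eq_zero
    (fun j => (if j = i then 1 else 0) + (if j = i + 1 then (C.POT (i + 1) : ℤ) else 0))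
    (C.vvec_mul_bag_sum hi) t

lemma one_le_vvec_of_mem_places {i : ℕ} (hi : i ≠ Nn) {p : P} (hp : p ∈ C.places i) :
    1 ≤ C.vvec i p := by
  rw [C.vvec_of_ne hi, (C.mem_places_iff).1 hp]
  simp

lemma one_le_vvec_of_mem_sdiff_placesMax [DecidableEq P] {i : ℕ} (hi : i ≠ Nn) {p : P}
    (hp : p ∈ C.places (i + 1) \ C.placesMax (i + 1)) : 1 ≤ C.vvec i p := by
  obtain ⟨hplaces, hnotmax⟩ := Finset.mem_sdiff.1 hp
  have hlayer := (C.mem_places_iff).1 hplaces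
  have hlt : C.pot p < C.POT (i + 1) :=
    (hlayer ▸ C.pot_le_POT p).lt_of_ne fun h => hnotmax (Finset.mem_filter.2 ⟨hplaces, h⟩)
  rw [C.vvec_of_ne hi, if_neg (by omega), if_pos hlayer, cin, hlayer]
  omega

lemma coe_le_vdot_of_one_le_vvec {i : ℕ} (hi : i ≠ Nn) {p : P} (hp : 1 ≤ C.vvec i p)
    {m0 m : P → ℕ} (h : Reach C.Wm C.Wp m0 m) : (m p : ℤ) ≤ C.vdot i m0 :=
  h.coe_le_sum_mul (C.vvec_incidence_eq_zero hi) (C.vvec_nonneg hi) hp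

end ClosedPi3

namespace OpenPi3

variable {P T : Type} [Fintype P] [Fintype T] {Nn : ℕ} (O : OpenPi3 P T Nn)

lemma some_mem_closed_places_iff {p : P} {i : ℕ} :
    some p ∈ O.closed.places i ↔ p ∈ O.places i := by
  rw [places, ClosedPi3.places, Finset.mem_filter, Finset.mem_filter]
  simp only [Finset.mem_univ, true_and, layer]

lemma closed_places_eq_map {i : ℕ} (hi : i ≠ Nn) :
    O.closed.places i = (O.places i).map Function.Embedding.some := by
  ext o
  cases o with
  | none => simp [ClosedPi3.places, O.pext_layer, Ne.symm hi]
  | some p => simp [O.some_mem_closed_places_iff]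

lemma POT_eq_closed_POT {i : ℕ} (hi : i ≠ Nn) : O.POT i = O.closed.POT i := by
  rw [POT, if_neg hi, ClosedPi3.POT, O.closed_places_eq_map hi, Finset.sup_map]
  rfl

lemma some_mem_closed_placesMax_iff {p : P} {i : ℕ} (hi : i ≠ Nn) :
    some p ∈ O.closed.placesMax i ↔ p ∈ O.placesMax i := by
  simp only [placesMax, ClosedPi3.placesMax, Finset.mem_filter, O.some_mem_closed_places_iff,
    O.POT_eq_closed_POT hi]
  rfl

lemma cin_eq_closed_cin {p : P} (hp : O.layer p ≠ Nn) : O.cin p = O.closed.cin (some p) := by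
  rw [cin, O.POT_eq_closed_POT hp]
  rfl

lemma closed_vvec_none {i : ℕ} (hi : i + 1 < Nn) : O.closed.vvec i none = 0 := by
  rw [ClosedPi3.vvec, if_neg (by omega)]
  simp [O.pext_layer, show Nn ≠ i by omega, hi.ne']

lemma vvec_eq_closed_vvec {i : ℕ} (hi : i + 1 < Nn) (p : P) :
    O.vvec i p = O.closed.vvec i (some p) := by
  rw [O.closed.vvec_of_ne (by omega), vvec]
  change _ = (if O.layer p = i then 1 else 0) + (if O.layer p = i + 1 then _ else 0)
  split_ifs <;> first | rfl | rw [O.cin_eq_closed_cin (by omega)]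

lemma vvec_incidence_eq_zero {i : ℕ} (hi : i + 1 < Nn) (t : T) :
    ∑ p, O.vvec i p * ((O.Wp p t : ℤ) - O.Wm p t) = 0 := by
  have h := O.closed.vvec_incidence_eq_zero (i := i) (by omega) t
  rw [Fintype.sum_option, O.closed_vvec_none hi, zero_mul, zero_add] at h
  simp only [O.vvec_eq_closed_vvec hi]
  exact h

lemma coe_le_vdot_of_one_le_closed_vvec {i : ℕ} (hi : i + 1 < Nn) {p : P}
    (hp : 1 ≤ O.closed.vvec i (some p)) {m0 m : P → ℕ} (h : Reach O.Wm O.Wp m0 m) :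
    (m p : ℤ) ≤ O.vdot i m0 :=
  h.coe_le_sum_mul (O.vvec_incidence_eq_zero hi)
    (fun q => O.vvec_eq_closed_vvec hi q ▸ O.closed.vvec_nonneg (by omega) _)
    (O.vvec_eq_closed_vvec hi p ▸ hp)

end OpenPi3

/-- bounds on places of small layers of an N-layer (open or
closed) Π³-net with `N ≥ 3`: for reachable `m`, `m(p) ≤ C_i^{m0}` when
`p ∈ P_i`, `i ≤ N−2`, and `m(p) ≤ C_{N−2}^{m0}` when `p ∈ P_{N−1}^{¬max}`. -/
theorem stmt_17 :
    (∀ (P T : Type) [Fintype P] [Fintype T] [DecidableEq P] (Nn : ℕ),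
      3 ≤ Nn → ∀ (C : ClosedPi3 P T Nn) (m0 m : P → ℕ),
        Reach C.Wm C.Wp m0 m →
          (∀ i ∈ Finset.Icc 1 (Nn - 2), ∀ p ∈ C.places i,
            (m p : ℤ) ≤ C.vdot i m0) ∧
          (∀ p ∈ C.places (Nn - 1) \ C.placesMax (Nn - 1),
            (m p : ℤ) ≤ C.vdot (Nn - 2) m0)) ∧
    (∀ (P T : Type) [Fintype P] [Fintype T] [DecidableEq P] (Nn : ℕ),
      3 ≤ Nn → ∀ (O : OpenPi3 P T Nn) (m0 m : P → ℕ),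
        Reach O.Wm O.Wp m0 m →
          (∀ i ∈ Finset.Icc 1 (Nn - 2), ∀ p ∈ O.places i,
            (m p : ℤ) ≤ O.vdot i m0) ∧
          (∀ p ∈ O.places (Nn - 1) \ O.placesMax (Nn - 1),
            (m p : ℤ) ≤ O.vdot (Nn - 2) m0)) := by
  refine ⟨fun P T _ _ _ Nn hN C m0 m h => ⟨?_, ?_⟩,
    fun P T _ _ _ Nn hN O m0 m h => ⟨?_, ?_⟩⟩
  · intro i hi p hp
    have hiN : i ≠ Nn := by have := Finset.mem_Icc.1 hi; omega
    exact C.coe_le_vdot_of_one_le_vvec hiN (C.one_le_vvec_of_mem_places hiN hp) h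
  · intro p hp
    rw [show Nn - 1 = Nn - 2 + 1 by omega] at hp
    exact C.coe_le_vdot_of_one_le_vvec (by omega)
      (C.one_le_vvec_of_mem_sdiff_placesMax (by omega) hp) h
  · intro i hi p hp
    have hiN : i + 1 < Nn := by have := Finset.mem_Icc.1 hi; omega
    exact O.coe_le_vdot_of_one_le_closed_vvec hiN
      (O.closed.one_le_vvec_of_mem_places (by omega) (O.some_mem_closed_places_iff.2 hp)) h
  · intro p hp
    rw [show Nn - 1 = Nn - 2 + 1 by omega] at hp
    have hp' : some p ∈ O.closed.places (Nn - 2 + 1) \ O.closed.placesMax (Nn - 2 + 1) := by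
      rw [Finset.mem_sdiff, O.some_mem_closed_places_iff,
        O.some_mem_closed_placesMax_iff (by omega)]
      exact Finset.mem_sdiff.1 hp
    exact O.coe_le_vdot_of_one_le_closed_vvec (by omega)
      (O.closed.one_le_vvec_of_mem_sdiff_placesMax (by omega) hp') h
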